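/- There exists a constant c₄ > 0, independent of n and θ, such that for every 0 < θ < 1/30 and every n ≥ 1, the number of reduced words of length n that are readable in some reduced u-barbell graph for some word u with |u| ≤ θ·n is at most c₄·2^{n/5}. -/

import Mathlib

open scoped Classical

/-- Letters of the modular group alphabet: `0 = a`, `1 = b`, `2 = b⁻¹`. -/
abbrev ModLetter := Fin 3

/-- Words over the alphabet `A = {a, b, b⁻¹}`. -/
abbrev ModWord := List ModLetter

def La : ModLetter := 0
def Lb : ModLetter := 1
def Lbinv : ModLetter := 2

/-- The letter-inverse map: `a ↦ a`, `b ↦ b⁻¹`, `b⁻¹ ↦ b`. -/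
def invLetter (x : ModLetter) : ModLetter :=
  if x = Lb then Lbinv else if x = Lbinv then Lb else x

/-- Formal inverse of a word. -/
def wordInv (w : ModWord) : ModWord := (w.map invLetter).reverse

/-- The automorphism `η` applied letterwise: `a ↦ a`, `b ↦ b⁻¹`, `b⁻¹ ↦ b`. -/
def etaWord (w : ModWord) : ModWord := w.map invLetter

/-- `η^δ` for `δ ∈ {0,1}` (encoded as a `Bool`). -/
def etaPow (δ : Bool) (w : ModWord) : ModWord := if δ then etaWord w else w

/-- A pair of adjacent letters is admissible iff exactly one of the two letters is `a`;
this excludes precisely the forbidden subwords `aa`, `bb⁻¹`, `b⁻¹b`, `bb`, `b⁻¹b⁻¹`. -/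
def OkPair (x y : ModLetter) : Prop := (x = La ∧ y ≠ La) ∨ (x ≠ La ∧ y = La)

/-- A word is reduced iff it contains no forbidden length-two subword. -/
def Reduced (w : ModWord) : Prop := w.Chain' OkPair

/-- A word is cyclically reduced iff all of its cyclic permutations are reduced. -/
def CyclicallyReduced (w : ModWord) : Prop := ∀ k, Reduced (w.rotate k)

/-- `w` is a cyclic permutation of `v`. -/
def IsCyclicPermOf (w v : ModWord) : Prop := ∃ k, w = v.rotate k

/-- The defining relators `a²`, `b³` of the modular group. -/
def modRels : Set (FreeGroup (Fin 2)) := {FreeGroup.of 0 ^ 2, FreeGroup.of 1 ^ 3}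

/-- The modular group `M = ⟨a, b | a² = b³ = 1⟩`. -/
abbrev Mgrp := PresentedGroup modRels

/-- The generator `a` of `M`. -/
def ma : Mgrp := PresentedGroup.of 0

/-- The generator `b` of `M`. -/
def mb : Mgrp := PresentedGroup.of 1

def letterToM (x : ModLetter) : Mgrp :=
  if x = La then ma else if x = Lb then mb else mb⁻¹

/-- The element of `M` represented by a word. -/
def wordToM (w : ModWord) : Mgrp := (w.map letterToM).prod

/-- The normal closure in `M` of a set of words. -/
def relSubgroup (S : Set ModWord) : Subgroup Mgrp :=
  Subgroup.normalClosure (wordToM '' S)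

instance relSubgroup_normal (S : Set ModWord) : (relSubgroup S).Normal :=
  Subgroup.normalClosure_normal

/-- The quotient group `M/⟨⟨S⟩⟩`. -/
def Gquot (S : Set ModWord) : Type := Mgrp ⧸ relSubgroup S

instance (S : Set ModWord) : Group (Gquot S) :=
  inferInstanceAs (Group (Mgrp ⧸ relSubgroup S))

/-- The quotient projection `M → M/⟨⟨S⟩⟩`. -/
def projG (S : Set ModWord) : Mgrp →* Gquot S := QuotientGroup.mk' (relSubgroup S)

/-- The image of the generator `a` in the quotient. -/
def aG (S : Set ModWord) : Gquot S := projG S ma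

/-- The image of the generator `b` in the quotient. -/
def bG (S : Set ModWord) : Gquot S := projG S mb

/-- `u` is admissible as the bar of a reduced `u`-barbell graph: cyclically reduced,
of even positive length, beginning with `b` or `b⁻¹` and ending with `a`. -/
def BarbellWord (u : ModWord) : Prop :=
  CyclicallyReduced u ∧ 0 < u.length ∧ u.length % 2 = 0 ∧
    (u.head? = some Lb ∨ u.head? = some Lbinv) ∧ u.getLast? = some La

/-- The block `a u b^ε u⁻¹`. -/
def barbellBlock (u : ModWord) (ε : Bool) : ModWord :=
  [La] ++ u ++ [if ε then Lb else Lbinv] ++ wordInv u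

/-- A word `w` is readable in the reduced `u`-barbell graph iff it is a subword of some
concatenation `(a u b^{ε₁} u⁻¹) ⋯ (a u b^{ε_t} u⁻¹)`. -/
def BarbellReadable (u w : ModWord) : Prop :=
  ∃ εs : List Bool, w <:+: (εs.map (barbellBlock u)).flatten

/-- `w` is `θ`-readable. -/
def ThetaReadable (θ : ℝ) (w : ModWord) : Prop :=
  ∃ (v u : ModWord) (k : ℕ),
    (v <:+: w.rotate k ∨ v <:+: (wordInv w).rotate k) ∧
    (w.length : ℝ) ≤ 2 * v.length ∧
    BarbellWord u ∧ (u.length : ℝ) ≤ θ * v.length ∧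
    BarbellReadable u v

/-- A set of words is symmetrized if it is closed under cyclic permutations and inverses. -/
def Symmetrized (R : Set ModWord) : Prop :=
  ∀ w ∈ R, (∀ k, w.rotate k ∈ R) ∧ wordInv w ∈ R

/-- The `C'(λ)` small cancellation condition over `M`. -/
def Cprime (lam : ℝ) (R : Set ModWord) : Prop :=
  ∀ r ∈ R, ∀ r' ∈ R, r ≠ r' → ∀ u : ModWord, u ≠ [] → u <+: r → u <+: r' →
    (u.length : ℝ) < lam * r.length

/-- The symmetrized closure `R(τ)` of a tuple of words. -/
def symClosure {m : ℕ} (τ : Fin m → ModWord) : Set ModWord :=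
  {w | ∃ i k, w = (τ i).rotate k ∨ w = (wordInv (τ i)).rotate k}

/-- The genericity condition `Q_m(λ)` (for a tuple of cyclically reduced words). -/
def QCond {m : ℕ} (lam : ℝ) (τ : Fin m → ModWord) : Prop :=
  (∀ i, CyclicallyReduced (τ i)) ∧
  (∀ i, ¬ ThetaReadable (1/40) (τ i)) ∧
  Cprime lam (symClosure τ) ∧
  (∀ i, ¬ ∃ (s : Mgrp) (k : ℕ), 2 ≤ k ∧ wordToM (τ i) = s ^ k) ∧
  (∀ i j, i ≠ j → ¬ IsCyclicPermOf (τ i) (τ j) ∧ ¬ IsCyclicPermOf (τ i) (wordInv (τ j))) ∧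
  (∀ i j, ¬ ∃ (z : ModWord) (k k' : ℕ),
      z <:+: (etaWord (τ i)).rotate k ∧ (τ i).length < 3 * z.length ∧
      (z <:+: (τ j).rotate k' ∨ z <:+: (wordInv (τ j)).rotate k')) ∧
  (∀ i, ¬ IsCyclicPermOf (τ i) (wordInv (τ i))) ∧
  (∀ i, 1200 ≤ (τ i).length)

/-- The condition `U_m(λ) = Q_m(λ) ∩ T_m`. -/
def UCond {m : ℕ} (lam : ℝ) (τ : Fin m → ModWord) : Prop :=
  QCond lam τ ∧ ∀ i j, (τ i).length = (τ j).length

/-- `|τ| = max_i |r_i|`. -/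
def tupleLen {m : ℕ} (τ : Fin m → ModWord) : ℕ :=
  Finset.univ.sup fun i => (τ i).length

/-- `C^m`: tuples of cyclically reduced words. -/
def Cm (m : ℕ) : Set (Fin m → ModWord) := {τ | ∀ i, CyclicallyReduced (τ i)}

/-- `T_m`: tuples of cyclically reduced words, all of the same length. -/
def Tm (m : ℕ) : Set (Fin m → ModWord) :=
  {τ | (∀ i, CyclicallyReduced (τ i)) ∧ ∀ i j, (τ i).length = (τ j).length}

/-- `γ(n,S)`: the number of tuples in `S` with `|τ| = n`. -/
noncomputable def gammaCount {m : ℕ} (S : Set (Fin m → ModWord)) (n : ℕ) : ℕ :=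
  Nat.card {τ : Fin m → ModWord // τ ∈ S ∧ tupleLen τ = n}

/-- `ρ(n,S)`: the number of tuples in `S` with `|τ| ≤ n`. -/
noncomputable def rhoCount {m : ℕ} (S : Set (Fin m → ModWord)) (n : ℕ) : ℕ :=
  Nat.card {τ : Fin m → ModWord // τ ∈ S ∧ tupleLen τ ≤ n}

/-- `S` is exponentially generic in `X`. -/
def ExpGenericIn {m : ℕ} (S X : Set (Fin m → ModWord)) : Prop :=
  ∃ K : ℝ, 0 < K ∧ ∃ q : ℝ, 0 < q ∧ q < 1 ∧
    ∀ n : ℕ, 1 ≤ n → 1 - (rhoCount S n : ℝ) / (rhoCount X n : ℝ) ≤ K * q ^ n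

/-- The image of `ψ` is a finite cyclic group of order `1`, `2` or `3`. -/
def SmallCyclicImage {G H : Type*} [Group G] [Group H] (ψ : G →* H) : Prop :=
  ∃ x : H, ψ.range = Subgroup.zpowers x ∧
    (orderOf x = 1 ∨ orderOf x = 2 ∨ orderOf x = 3)

/-- A subgroup `H ≤ G` is malnormal: for `g ∉ H`, `gHg⁻¹ ∩ H = 1`. -/
def Malnormal {G : Type*} [Group G] (H : Subgroup G) : Prop :=
  ∀ g : G, g ∉ H → ∀ x ∈ H, g * x * g⁻¹ ∈ H → x = 1

/-- The tuple obtained from `τ` by reordering by `π`, rotating entries by `k i`,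
inverting the entries with `ε i = true`, and applying `η` iff `δ = true`. -/
def tupleTransform {m : ℕ} (π : Equiv.Perm (Fin m)) (k : Fin m → ℕ) (ε : Fin m → Bool)
    (δ : Bool) (τ : Fin m → ModWord) : Fin m → ModWord :=
  fun i => etaPow δ ((if ε i then wordInv (τ (π i)) else τ (π i)).rotate (k i))

/-- The parameters of a transformation are formally trivial on `τ`. -/
def TrivialParams {m : ℕ} (π : Equiv.Perm (Fin m)) (k : Fin m → ℕ) (ε : Fin m → Bool)
    (δ : Bool) (τ : Fin m → ModWord) : Prop :=
  π = Equiv.refl (Fin m) ∧ (∀ i, k i % (τ i).length = 0) ∧ (∀ i, ε i = false) ∧ δ = false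

/-- The condition `U'_m(λ)`. -/
def UprimeCond {m : ℕ} (lam : ℝ) (τ : Fin m → ModWord) : Prop :=
  UCond lam τ ∧
  ∀ π k ε δ, ¬ TrivialParams π k ε δ τ →
    (fun i => (τ i).take ⌊lam * (tupleLen τ : ℝ)⌋₊) ≠
      (fun i => ((tupleTransform π k ε δ τ) i).take ⌊lam * (tupleLen τ : ℝ)⌋₊)

/-- The number of isomorphism classes of groups `G_τ` over all `m`-tuples `τ` of
cyclically reduced words of length exactly `n`. -/
noncomputable def Icount (m n : ℕ) : ℕ :=
  Nat.card (Quot (fun τ σ : {τ : Fin m → ModWord //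
      (∀ i, CyclicallyReduced (τ i)) ∧ ∀ i, (τ i).length = n} =>
    Nonempty (Gquot (Set.range τ.1) ≃* Gquot (Set.range σ.1))))

/-- The absolute `T`-invariant `T₁(G)`: the minimal total relator length of a finite
presentation of `G`. -/
noncomputable def T1inv (G : Type) [Group G] : ℕ :=
  sInf {ℓ : ℕ | ∃ (s t : ℕ) (rels : Fin t → FreeGroup (Fin s)),
    Nonempty (G ≃* PresentedGroup (Set.range rels)) ∧
    ℓ = ∑ i, ((rels i).toWord.length)}

/-- binary encoding with leading 1 -/
def nb : List Bool → ℕ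
  | [] => 1
  | b :: t => 2 * nb t + (if b then 1 else 0)

lemma nb_pos (l : List Bool) : 1 ≤ nb l := by
  induction l with
  | nil => simp [nb]
  | cons b t ih => simp only [nb]; omega

lemma nb_lt (l : List Bool) : nb l < 2 ^ (l.length + 1) := by
  induction l with
  | nil => simp [nb]
  | cons b t ih => simp only [nb, List.length_cons, pow_succ]; cases b <;> simp <;> omega

lemma nb_inj : ∀ l₁ l₂ : List Bool, nb l₁ = nb l₂ → l₁ = l₂ := by
  intro l₁
  induction l₁ with
  | nil =>
    intro l₂ h; cases l₂ with
    | nil => rfl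
    | cons b t => have := nb_pos t; simp only [nb] at h; cases b <;> simp at h <;> omega
  | cons b t ih =>
    intro l₂ h; cases l₂ with
    | nil => have := nb_pos t; simp only [nb] at h; cases b <;> simp at h <;> omega
    | cons b' t' =>
      simp only [nb] at h
      have hb : b = b' ∧ nb t = nb t' := by cases b <;> cases b' <;> simp at h ⊢ <;> omega
      rw [hb.1, ih _ hb.2]

def decode (l : List Bool) : ModWord :=
  (l.map (fun s => [if s then Lb else Lbinv, La])).flatten

lemma decode_length (l : List Bool) : (decode l).length = 2 * l.length := by
  induction l with
  | nil => rfl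
  | cons b t ih => simp [decode] at ih ⊢; omega

lemma exists_decode : ∀ (N : ℕ) (u : ModWord), u.length ≤ N → Reduced u →
    u.length % 2 = 0 → (∀ z, u.head? = some z → z ≠ La) →
    ∃ l : List Bool, u = decode l ∧ 2 * l.length = u.length := by
  intro N
  induction N with
  | zero =>
    intro u hlen _ _ _
    have : u = [] := List.eq_nil_of_length_eq_zero (Nat.le_zero.mp hlen)
    exact ⟨[], by simp [this, decode]⟩
  | succ N ih =>
    intro u hlen hred heven hhead
    match u with
    | [] => exact ⟨[], by simp [decode]⟩
    | [x] => simp at heven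
    | x :: y :: rest =>
      have hxy : OkPair x y ∧ List.Chain' OkPair (y :: rest) := List.isChain_cons_cons.mp hred
      have hx : x ≠ La := hhead x rfl
      have hy : y = La := hxy.1.elim (fun h => absurd h.1 hx) And.right
      have hrest_red : Reduced rest := hxy.2.tail
      have hrest_head : ∀ z, rest.head? = some z → z ≠ La := by
        intro z hz
        match rest, hz with
        | z :: rest', rfl =>
          have := List.isChain_cons_cons.mp hxy.2
          rcases this.1 with ⟨_, h2⟩ | ⟨h1, _⟩
          · exact h2
          · exact absurd hy h1
      have hrest_len : rest.length ≤ N := by simp at hlen; omega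
      have hrest_even : rest.length % 2 = 0 := by simp at heven ⊢; omega
      obtain ⟨l, hl, hll⟩ := ih rest hrest_len hrest_red hrest_even hrest_head
      have hxval : x = Lb ∨ x = Lbinv :=
        (by decide : ∀ z : ModLetter, z ≠ La → z = Lb ∨ z = Lbinv) x hx
      refine ⟨(x = Lb) :: l, ?_, by simp; omega⟩
      subst hy
      rcases hxval with h | h <;> subst h <;>
        simp [decode, hl, decode, Lb, Lbinv, La]

lemma barbellBlock_length (u : ModWord) (ε : Bool) :
    (barbellBlock u ε).length = 2 * u.length + 2 := by
  simp [barbellBlock, wordInv]; omega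

section FlattenHelpers
variable {α β : Type*}

lemma flatten_map_take (f : α → List β) {B : ℕ} (hB : ∀ x, (f x).length = B) :
    ∀ (l : List α) (k : ℕ),
    ((l.take k).map f).flatten = ((l.map f).flatten).take (k * B) := by
  intro l
  induction l with
  | nil => intro k; simp
  | cons x t ih =>
    intro k
    cases k with
    | zero => simp
    | succ k =>
      simp only [List.take_succ_cons, List.map_cons, List.flatten_cons, ih]
      have : (k + 1) * B = (f x).length + k * B := by rw [hB]; ring
      rw [this, List.take_append]
      rw [List.take_of_length_le (Nat.le_add_right _ _), Nat.add_sub_cancel_left]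

lemma flatten_map_drop (f : α → List β) {B : ℕ} (hB : ∀ x, (f x).length = B) :
    ∀ (l : List α) (q : ℕ),
    ((l.drop q).map f).flatten = ((l.map f).flatten).drop (q * B) := by
  intro l
  induction l with
  | nil => intro q; simp
  | cons x t ih =>
    intro q
    cases q with
    | zero => simp
    | succ q =>
      simp only [List.drop_succ_cons, List.map_cons, List.flatten_cons, ih]
      have : (q + 1) * B = (f x).length + q * B := by rw [hB]; ring
      rw [this, List.drop_append]
      rw [List.drop_of_length_le (Nat.le_add_right _ _), Nat.add_sub_cancel_left, List.nil_append]

end FlattenHelpers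

lemma readable_normal_form {u w : ModWord} {εs : List Bool}
    (hinf : w <:+: (εs.map (barbellBlock u)).flatten) :
    ∃ (r : ℕ) (εs' : List Bool), r < 2 * u.length + 2 ∧
      εs'.length ≤ w.length / (2 * u.length + 2) + 2 ∧
      w = (((εs'.map (barbellBlock u)).flatten).drop r).take w.length := by
  set B := 2 * u.length + 2 with hBdef
  have hBpos : 0 < B := by omega
  have hB : ∀ ε, (barbellBlock u ε).length = B := fun ε => barbellBlock_length u ε
  obtain ⟨s, t, hst⟩ := hinf
  set q := s.length / B with hq
  set r := s.length % B with hr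
  have hqr : q * B + r = s.length := by rw [hq, hr, Nat.mul_comm]; exact Nat.div_add_mod _ _
  have hrB : r < B := Nat.mod_lt _ hBpos
  set k := w.length / B + 2 with hk
  refine ⟨r, (εs.drop q).take k, hrB, by simpa using List.length_take_le' .., ?_⟩
  have hflat : (((εs.drop q).take k).map (barbellBlock u)).flatten
      = (((εs.map (barbellBlock u)).flatten).drop (q * B)).take (k * B) := by
    rw [flatten_map_take _ hB, flatten_map_drop _ hB]
  rw [hflat]
  have hqle : q * B ≤ s.length := by omega
  have hs : s = s.take (q * B) ++ s.drop (q * B) := (List.take_append_drop _ _).symm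
  have hlen1 : (s.take (q * B)).length = q * B := List.length_take_of_le hqle
  have hlen2 : (s.drop (q * B)).length = r := by simp; omega
  have hF : (List.map (barbellBlock u) εs).flatten
      = s.take (q * B) ++ (s.drop (q * B) ++ (w ++ t)) := by
    rw [← hst]
    conv_lhs => rw [hs]
    rw [List.append_assoc, List.append_assoc]
  rw [hF]
  have hdrop : (s.take (q * B) ++ (s.drop (q * B) ++ (w ++ t))).drop (q * B)
      = s.drop (q * B) ++ (w ++ t) := List.drop_left' hlen1
  rw [hdrop]
  have hkB : k * B = B * (w.length / B) + 2 * B := by rw [hk]; ring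
  have hmod := Nat.div_add_mod w.length B
  have hmodlt : w.length % B < B := Nat.mod_lt _ hBpos
  have hrn : r + w.length ≤ k * B := by omega
  rw [List.take_append,
    List.take_of_length_le (by omega : (s.drop (q * B)).length ≤ k * B),
    List.drop_left' hlen2, List.take_take]
  have hmin : min w.length (k * B - (s.drop (q * B)).length) = w.length := by
    rw [hlen2]; omega
  rw [hmin, List.take_left' rfl]

/-- There is a constant `c₄ > 0`, independent of `n` and `θ`, such that
for every `0 < θ < 1/30` and every `n ≥ 1`, the number of reduced words of length `n`
readable in some reduced `u`-barbell graph with `|u| ≤ θ·n` is at most `c₄·2^{n/5}`. -/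
theorem count_short_barbell_readable_words :
    ∃ c₄ : ℝ, 0 < c₄ ∧ ∀ θ : ℝ, 0 < θ → θ < 1 / 30 → ∀ n : ℕ, 1 ≤ n →
      (Nat.card {w : ModWord // Reduced w ∧ w.length = n ∧
          ∃ u : ModWord, BarbellWord u ∧ (u.length : ℝ) ≤ θ * n ∧
            BarbellReadable u w} : ℝ) ≤ c₄ * (2 : ℝ) ^ ((n : ℝ) / 5) := by
  classical
  refine ⟨12800, by norm_num, ?_⟩
  intro θ hθ0 hθ n hn
  have key : ∀ w : {w : ModWord // Reduced w ∧ w.length = n ∧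
      ∃ u : ModWord, BarbellWord u ∧ (u.length : ℝ) ≤ θ * n ∧ BarbellReadable u w},
      ∃ (l εs' : List Bool) (r : ℕ), l.length ≤ n / 60 ∧ εs'.length ≤ n / 6 + 2 ∧
        r < 2 * n + 2 ∧
        w.1 = (((εs'.map (barbellBlock (decode l))).flatten).drop r).take n := by
    rintro ⟨w, hred, hlen, u, hu, hulen, εs, hinf⟩
    obtain ⟨hcyc, hupos, hueven, huhead, -⟩ := hu
    have hured : Reduced u := by have := hcyc 0; rwa [List.rotate_zero] at this
    have hhead : ∀ z : ModLetter, u.head? = some z → z ≠ La := by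
      intro z hz
      rcases huhead with h | h <;> rw [h] at hz <;>
        [exact (Option.some.inj hz) ▸ (by decide : Lb ≠ La);
         exact (Option.some.inj hz) ▸ (by decide : Lbinv ≠ La)]
    obtain ⟨l, hl, hll⟩ := exists_decode u.length u le_rfl hured hueven hhead
    obtain ⟨r, εs', hr, hεs', hw⟩ := readable_normal_form hinf
    rw [hlen] at hw hεs'
    have hnpos : (0:ℝ) < n := by exact_mod_cast hn
    have h30R : (30 * u.length : ℝ) < n := by nlinarith
    have h30 : 30 * u.length < n := by exact_mod_cast h30R
    have hm2 : 2 ≤ u.length := by omega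
    refine ⟨l, εs', r, ?_, ?_, by omega, by rw [hl] at hw; exact hw⟩
    · rw [Nat.le_div_iff_mul_le (by norm_num : 0 < 60)]
      omega
    · calc εs'.length ≤ n / (2 * u.length + 2) + 2 := hεs'
        _ ≤ n / 6 + 2 := by
            have : n / (2 * u.length + 2) ≤ n / 6 :=
              Nat.div_le_div_left (by omega) (by norm_num)
            omega
  choose L E R hL hE hR hw using key
  have hcard : Nat.card {w : ModWord // Reduced w ∧ w.length = n ∧
      ∃ u : ModWord, BarbellWord u ∧ (u.length : ℝ) ≤ θ * n ∧ BarbellReadable u w}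
      ≤ 2 ^ (n / 60 + 2) * ((2 * n + 2) * 2 ^ (n / 6 + 4)) := by
    have hinj : Function.Injective (fun w : {w : ModWord // Reduced w ∧ w.length = n ∧
        ∃ u : ModWord, BarbellWord u ∧ (u.length : ℝ) ≤ θ * n ∧ BarbellReadable u w} =>
        ((⟨nb (L w), lt_of_lt_of_le (nb_lt (L w))
            (Nat.pow_le_pow_right (by norm_num) (by have := hL w; omega))⟩ : Fin (2 ^ (n / 60 + 2))),
         (⟨R w, hR w⟩ : Fin (2 * n + 2)),
         (⟨nb (E w), lt_of_lt_of_le (nb_lt (E w))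
            (Nat.pow_le_pow_right (by norm_num) (by have := hE w; omega))⟩ : Fin (2 ^ (n / 6 + 4))))) := by
      intro w₁ w₂ heq
      simp only [Prod.mk.injEq, Fin.mk.injEq] at heq
      obtain ⟨h1, h2, h3⟩ := heq
      have hL12 : L w₁ = L w₂ := nb_inj _ _ h1
      have hE12 : E w₁ = E w₂ := nb_inj _ _ h3
      apply Subtype.ext
      rw [hw w₁, hw w₂, hL12, hE12, h2]
    have := Nat.card_le_card_of_injective _ hinj
    simpa [Nat.card_eq_fintype_card, mul_assoc] using this
  have hnn : (0:ℝ) ≤ (n:ℝ) := Nat.cast_nonneg n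
  calc (Nat.card {w : ModWord // Reduced w ∧ w.length = n ∧
      ∃ u : ModWord, BarbellWord u ∧ (u.length : ℝ) ≤ θ * n ∧ BarbellReadable u w} : ℝ)
      ≤ ((2 ^ (n / 60 + 2) * ((2 * n + 2) * 2 ^ (n / 6 + 4)) : ℕ) : ℝ) := by
        exact_mod_cast hcard
    _ = ((2 ^ (n / 60 + 2) : ℕ):ℝ) * ((2 * (n:ℝ) + 2) * ((2 ^ (n / 6 + 4) : ℕ):ℝ)) := by
        push_cast
        ring
    _ ≤ ((2:ℝ) ^ ((n:ℝ)/60 + 2)) * ((2 * (n:ℝ) + 2) * (2:ℝ) ^ ((n:ℝ)/6 + 4)) := by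
        have d1 : ((n / 60 : ℕ):ℝ) ≤ (n:ℝ)/60 := Nat.cast_div_le
        have d2 : ((n / 6 : ℕ):ℝ) ≤ (n:ℝ)/6 := Nat.cast_div_le
        have A1 : ((2 ^ (n / 60 + 2) : ℕ):ℝ) ≤ (2:ℝ) ^ ((n:ℝ)/60 + 2) := by
          calc ((2 ^ (n / 60 + 2) : ℕ):ℝ) = (2:ℝ) ^ (((n / 60 + 2 : ℕ)):ℝ) := by
                rw [Real.rpow_natCast]; norm_cast
            _ ≤ _ := Real.rpow_le_rpow_of_exponent_le one_le_two (by push_cast; linarith)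
        have A2 : ((2 ^ (n / 6 + 4) : ℕ):ℝ) ≤ (2:ℝ) ^ ((n:ℝ)/6 + 4) := by
          calc ((2 ^ (n / 6 + 4) : ℕ):ℝ) = (2:ℝ) ^ (((n / 6 + 4 : ℕ)):ℝ) := by
                rw [Real.rpow_natCast]; norm_cast
            _ ≤ _ := Real.rpow_le_rpow_of_exponent_le one_le_two (by push_cast; linarith)
        have hn2 : (0:ℝ) ≤ 2 * (n:ℝ) + 2 := by linarith
        apply mul_le_mul A1 _ (by positivity) (by positivity)
        apply mul_le_mul le_rfl A2 (by positivity) hn2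
    _ ≤ 12800 * (2:ℝ) ^ ((n:ℝ)/5) := by
        have hmain : 2 * (n:ℝ) + 2 ≤ 12800 * (2:ℝ) ^ ((n:ℝ)/60 - 6) := by
          have hsub : (2:ℝ) ^ ((n:ℝ)/60 - 6) = (2:ℝ) ^ ((n:ℝ)/60) / (2:ℝ) ^ (6:ℝ) :=
            Real.rpow_sub two_pos _ _
          have h64 : (2:ℝ) ^ (6:ℝ) = 64 := by
            rw [show (6:ℝ) = ((6:ℕ):ℝ) by norm_num, Real.rpow_natCast]; norm_num
          rw [hsub, h64]
          have hlog : (0.69:ℝ) ≤ Real.log 2 := by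
            have := Real.log_two_gt_d9; linarith
          have hexp : (2:ℝ) ^ ((n:ℝ)/60) = Real.exp (Real.log 2 * ((n:ℝ)/60)) :=
            Real.rpow_def_of_pos two_pos _
          have h1 : Real.log 2 * ((n:ℝ)/60) + 1 ≤ Real.exp (Real.log 2 * ((n:ℝ)/60)) :=
            Real.add_one_le_exp _
          have ht : 0.0115 * (n:ℝ) ≤ Real.log 2 * ((n:ℝ)/60) := by
            have : (0.69:ℝ) * ((n:ℝ)/60) ≤ Real.log 2 * ((n:ℝ)/60) :=
              mul_le_mul_of_nonneg_right hlog (by positivity)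
            linarith
          rw [hexp]
          linarith
        calc (2:ℝ) ^ ((n:ℝ)/60 + 2) * ((2 * (n:ℝ) + 2) * (2:ℝ) ^ ((n:ℝ)/6 + 4))
            = (2 * (n:ℝ) + 2) * ((2:ℝ) ^ ((n:ℝ)/60 + 2) * (2:ℝ) ^ ((n:ℝ)/6 + 4)) := by ring
          _ ≤ (12800 * (2:ℝ) ^ ((n:ℝ)/60 - 6)) *
                ((2:ℝ) ^ ((n:ℝ)/60 + 2) * (2:ℝ) ^ ((n:ℝ)/6 + 4)) := by
              apply mul_le_mul_of_nonneg_right hmain (by positivity)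
          _ = 12800 * (2:ℝ) ^ ((n:ℝ)/5) := by
              rw [mul_assoc, ← Real.rpow_add two_pos, ← Real.rpow_add two_pos]
              congr 1
              ring
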